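/- Let T > 0 and let Ψ : ℝ² → ℝ² be locally Lipschitz and quasi-increasing, meaning that for each fixed x the map y ↦ Ψ₁(x,y) is monotone nondecreasing, and for each fixed y the map x ↦ Ψ₂(x,y) is monotone nondecreasing. Let A, B : [0,T] → ℝ² be continuously differentiable with B'(t) = Ψ(B(t)) for all t, A₁'(t) ≥ Ψ₁(A(t)) and A₂'(t) ≥ Ψ₂(A(t)) for all t, and B₁(0) ≤ A₁(0), B₂(0) ≤ A₂(0). Then B₁(t) ≤ A₁(t) and B₂(t) ≤ A₂(t) for all t ∈ [0,T]. -/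

import Mathlib

/-!
Let `d = B - A` and `u = max d₁ d₂ 0`. When `d₁` is the largest coordinate and is nonnegative,
quasi-monotonicity lets us replace `A` by the point `(A₁, min A₂ B₂) ≤ A`, which lies within `u`
of `B`; hence `d₁' ≤ Ψ₁(B) - Ψ₁(A₁, min A₂ B₂) ≤ K u`, with `K` a Lipschitz constant of `Ψ` on a
ball containing both curves, and symmetrically for `d₂`. So the right Dini derivative of `u` is
at most `K u`, and Grönwall's inequality with `u 0 = 0` gives `u = 0`.
-/

open Set Metric Filter Topology NNReal

lemma fst_sub_le_of_lipschitzOnWith {Ψ : ℝ × ℝ → ℝ × ℝ} {K : ℝ≥0} {s : Set (ℝ × ℝ)}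
    (hΨ : LipschitzOnWith K Ψ s) (hmono : ∀ x, Monotone fun y => (Ψ (x, y)).1)
    {p q : ℝ × ℝ} (hq : q ∈ s) (hpq : (p.1, min p.2 q.2) ∈ s)
    (h₀ : 0 ≤ q.1 - p.1) (h₂ : q.2 - p.2 ≤ q.1 - p.1) :
    (Ψ q).1 - (Ψ p).1 ≤ K * (q.1 - p.1) := by
  have hdist : dist q (p.1, min p.2 q.2) ≤ q.1 - p.1 := by
    rw [Prod.dist_eq, Real.dist_eq, Real.dist_eq, abs_of_nonneg h₀,
      abs_of_nonneg (sub_nonneg.2 (min_le_right _ _))]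
    exact max_le le_rfl (by rcases min_cases p.2 q.2 with ⟨h, _⟩ | ⟨h, _⟩ <;> rw [h] <;> linarith)
  calc (Ψ q).1 - (Ψ p).1 ≤ (Ψ q).1 - (Ψ (p.1, min p.2 q.2)).1 :=
        sub_le_sub_left (hmono p.1 (min_le_left _ _)) _
    _ ≤ dist (Ψ q) (Ψ (p.1, min p.2 q.2)) := by
        rw [Prod.dist_eq, Real.dist_eq]; exact (le_abs_self _).trans (le_max_left _ _)
    _ ≤ K * dist q (p.1, min p.2 q.2) := hΨ.dist_le_mul q hq _ hpq
    _ ≤ K * (q.1 - p.1) := by gcongr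

lemma snd_sub_le_of_lipschitzOnWith {Ψ : ℝ × ℝ → ℝ × ℝ} {K : ℝ≥0} {s : Set (ℝ × ℝ)}
    (hΨ : LipschitzOnWith K Ψ s) (hmono : ∀ y, Monotone fun x => (Ψ (x, y)).2)
    {p q : ℝ × ℝ} (hq : q ∈ s) (hpq : (min p.1 q.1, p.2) ∈ s)
    (h₀ : 0 ≤ q.2 - p.2) (h₁ : q.1 - p.1 ≤ q.2 - p.2) :
    (Ψ q).2 - (Ψ p).2 ≤ K * (q.2 - p.2) := by
  have hdist : dist q (min p.1 q.1, p.2) ≤ q.2 - p.2 := by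
    rw [Prod.dist_eq, Real.dist_eq, Real.dist_eq, abs_of_nonneg h₀,
      abs_of_nonneg (sub_nonneg.2 (min_le_right _ _))]
    exact max_le (by rcases min_cases p.1 q.1 with ⟨h, _⟩ | ⟨h, _⟩ <;> rw [h] <;> linarith) le_rfl
  calc (Ψ q).2 - (Ψ p).2 ≤ (Ψ q).2 - (Ψ (min p.1 q.1, p.2)).2 :=
        sub_le_sub_left (hmono p.2 (min_le_left _ _)) _
    _ ≤ dist (Ψ q) (Ψ (min p.1 q.1, p.2)) := by
        rw [Prod.dist_eq, Real.dist_eq]; exact (le_abs_self _).trans (le_max_right _ _)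
    _ ≤ K * dist q (min p.1 q.1, p.2) := hΨ.dist_le_mul q hq _ hpq
    _ ≤ K * (q.2 - p.2) := by gcongr

lemma eventually_inv_sub_mul_sub_lt {φ : ℝ → ℝ} {d c r x : ℝ}
    (hφ : HasDerivWithinAt φ d (Ici x) x) (hc : φ x ≤ c) (hr : 0 < r) (hd : φ x = c → d < r) :
    ∀ᶠ z in 𝓝[>] x, (z - x)⁻¹ * (φ z - c) < r := by
  rcases hc.eq_or_lt with rfl | hlt
  · simpa [slope_def_module] using hφ.Ioi_of_Ici.limsup_slope_le' (lt_irrefl x) (hd rfl)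
  · filter_upwards [self_mem_nhdsWithin,
      hφ.Ioi_of_Ici.continuousWithinAt.eventually_lt_const hlt]
      with z hz hφz
    exact (mul_neg_of_pos_of_neg (inv_pos.2 (sub_pos.2 hz)) (sub_neg.2 hφz)).trans hr

lemma eventually_inv_sub_mul_max_sub_lt {φ ψ : ℝ → ℝ} {d₁ d₂ r x : ℝ}
    (hφ : HasDerivWithinAt φ d₁ (Ici x) x) (hψ : HasDerivWithinAt ψ d₂ (Ici x) x) (hr : 0 < r)
    (h₁ : φ x = max (max (φ x) (ψ x)) 0 → d₁ < r) (h₂ : ψ x = max (max (φ x) (ψ x)) 0 → d₂ < r) :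
    ∀ᶠ z in 𝓝[>] x,
      (z - x)⁻¹ * (max (max (φ z) (ψ z)) 0 - max (max (φ x) (ψ x)) 0) < r := by
  filter_upwards
    [eventually_inv_sub_mul_sub_lt hφ ((le_max_left _ _).trans (le_max_left _ _)) hr h₁,
    eventually_inv_sub_mul_sub_lt hψ ((le_max_right _ _).trans (le_max_left _ _)) hr h₂,
    eventually_inv_sub_mul_sub_lt (hasDerivWithinAt_const x _ 0) (le_max_right _ _) hr
      fun _ => hr,
    self_mem_nhdsWithin] with z hφz hψz h0z hz
  have hz₀ : 0 ≤ (z - x)⁻¹ := inv_nonneg.2 (sub_nonneg.2 (le_of_lt hz))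
  rw [← max_sub_sub_right, ← max_sub_sub_right, mul_max_of_nonneg _ _ hz₀,
    mul_max_of_nonneg _ _ hz₀]
  exact max_lt (max_lt hφz hψz) h0z

theorem le_zero_of_deriv_right_le_mul_at_max_coord {d d' : ℝ → ℝ × ℝ} {K a b : ℝ} (hK : 0 ≤ K)
    (hd : ContinuousOn d (Icc a b))
    (hd' : ∀ x ∈ Ico a b, HasDerivWithinAt d (d' x) (Ici x) x) (ha : d a ≤ 0)
    (h₁ : ∀ x ∈ Ico a b, 0 ≤ (d x).1 → (d x).2 ≤ (d x).1 → (d' x).1 ≤ K * (d x).1)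
    (h₂ : ∀ x ∈ Ico a b, 0 ≤ (d x).2 → (d x).1 ≤ (d x).2 → (d' x).2 ≤ K * (d x).2) :
    ∀ x ∈ Icc a b, d x ≤ 0 := by
  set u : ℝ → ℝ := fun x => max (max (d x).1 (d x).2) 0
  have hu : ContinuousOn u (Icc a b) := (ContinuousOn.sup hd.fst hd.snd).sup continuousOn_const
  have hu' : ∀ x ∈ Ico a b, ∀ r, K * u x < r → ∃ᶠ z in 𝓝[>] x, (z - x)⁻¹ * (u z - u x) < r := by
    intro x hx r hr
    have hr₀ : 0 < r := (mul_nonneg hK (le_max_right _ _)).trans_lt hr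
    refine (eventually_inv_sub_mul_max_sub_lt (hasFDerivAt_fst.comp_hasDerivWithinAt x (hd' x hx))
      (hasFDerivAt_snd.comp_hasDerivWithinAt x (hd' x hx)) hr₀ ?_ ?_).frequently
    · intro (h : (d x).1 = u x)
      have h0 : 0 ≤ (d x).1 := h ▸ le_max_right _ _
      have h2 : (d x).2 ≤ (d x).1 := h ▸ (le_max_right _ _).trans (le_max_left _ _)
      exact (h₁ x hx h0 h2).trans_lt (h ▸ hr)
    · intro (h : (d x).2 = u x)
      have h0 : 0 ≤ (d x).2 := h ▸ le_max_right _ _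
      have h1 : (d x).1 ≤ (d x).2 := h ▸ (le_max_left _ _).trans (le_max_left _ _)
      exact (h₂ x hx h0 h1).trans_lt (h ▸ hr)
  intro x hx
  have hux : u x ≤ 0 := by
    simpa only [sub_zero, gronwallBound_ε0_δ0] using
      le_gronwallBound_of_liminf_deriv_right_le (δ := 0) hu hu' (max_le (max_le ha.1 ha.2) le_rfl)
        (fun _ _ => (add_zero _).ge) x hx
  exact ⟨(le_max_left _ _).trans ((le_max_left _ _).trans hux),
    (le_max_right _ _).trans ((le_max_left _ _).trans hux)⟩

theorem subsolution_le_supersolution_of_quasiMonotone {Ψ : ℝ × ℝ → ℝ × ℝ} {K : ℝ≥0}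
    {s : Set (ℝ × ℝ)} (hΨ : LipschitzOnWith K Ψ s)
    (hs : ∀ p ∈ s, ∀ q ∈ s, (p.1, min p.2 q.2) ∈ s ∧ (min p.1 q.1, p.2) ∈ s)
    (hquasi1 : ∀ x, Monotone fun y => (Ψ (x, y)).1)
    (hquasi2 : ∀ y, Monotone fun x => (Ψ (x, y)).2)
    {A B A' B' : ℝ → ℝ × ℝ} {a b : ℝ} (hAc : ContinuousOn A (Icc a b))
    (hBc : ContinuousOn B (Icc a b)) (hA : ∀ t ∈ Ico a b, HasDerivWithinAt A (A' t) (Ici t) t)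
    (hB : ∀ t ∈ Ico a b, HasDerivWithinAt B (B' t) (Ici t) t)
    (hAs : ∀ t ∈ Ico a b, A t ∈ s) (hBs : ∀ t ∈ Ico a b, B t ∈ s)
    (hsuper : ∀ t ∈ Ico a b, Ψ (A t) ≤ A' t) (hsub : ∀ t ∈ Ico a b, B' t ≤ Ψ (B t))
    (h₀ : B a ≤ A a) :
    ∀ t ∈ Icc a b, B t ≤ A t := by
  intro t ht
  refine sub_nonpos.1 <| le_zero_of_deriv_right_le_mul_at_max_coord (d := B - A) (d' := B' - A')
    K.coe_nonneg (hBc.sub hAc) (fun x hx => (hB x hx).sub (hA x hx)) (sub_nonpos.2 h₀) ?_ ?_ t ht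
  · intro x hx hd₁ hd₂
    have hΨ₁ := fst_sub_le_of_lipschitzOnWith hΨ hquasi1 (hBs x hx)
      (hs _ (hAs x hx) _ (hBs x hx)).1 hd₁ hd₂
    simp only [Pi.sub_apply, Prod.fst_sub]
    linarith [(hsuper x hx).1, (hsub x hx).1]
  · intro x hx hd₂ hd₁
    have hΨ₂ := snd_sub_le_of_lipschitzOnWith hΨ hquasi2 (hBs x hx)
      (hs _ (hAs x hx) _ (hBs x hx)).2 hd₂ hd₁
    simp only [Pi.sub_apply, Prod.snd_sub]
    linarith [(hsuper x hx).2, (hsub x hx).2]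

lemma mk_min_mem_closedBall_zero {R : ℝ} {p q : ℝ × ℝ} (hp : p ∈ closedBall 0 R)
    (hq : q ∈ closedBall 0 R) :
    (p.1, min p.2 q.2) ∈ closedBall 0 R ∧ (min p.1 q.1, p.2) ∈ closedBall 0 R := by
  simp only [mem_closedBall_zero_iff, norm_prod_le_iff, Real.norm_eq_abs] at *
  exact ⟨⟨hp.1, abs_min_le_max_abs_abs.trans (max_le hp.2 hq.2)⟩,
    ⟨abs_min_le_max_abs_abs.trans (max_le hp.1 hq.1), hp.2⟩⟩

theorem chaplygin
    (T : ℝ)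
    (Ψ : ℝ × ℝ → ℝ × ℝ) (hLip : LocallyLipschitz Ψ)
    (hquasi1 : ∀ x : ℝ, Monotone fun y : ℝ => (Ψ (x, y)).1)
    (hquasi2 : ∀ y : ℝ, Monotone fun x : ℝ => (Ψ (x, y)).2)
    (A B A' B' : ℝ → ℝ × ℝ)
    (hA : ∀ t ∈ Icc (0 : ℝ) T, HasDerivWithinAt A (A' t) (Icc (0 : ℝ) T) t)
    (hB : ∀ t ∈ Icc (0 : ℝ) T, HasDerivWithinAt B (B' t) (Icc (0 : ℝ) T) t)
    (hBode : ∀ t ∈ Icc (0 : ℝ) T, B' t = Ψ (B t))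
    (hA1 : ∀ t ∈ Icc (0 : ℝ) T, (Ψ (A t)).1 ≤ (A' t).1)
    (hA2 : ∀ t ∈ Icc (0 : ℝ) T, (Ψ (A t)).2 ≤ (A' t).2)
    (h01 : (B 0).1 ≤ (A 0).1) (h02 : (B 0).2 ≤ (A 0).2) :
    ∀ t ∈ Icc (0 : ℝ) T, (B t).1 ≤ (A t).1 ∧ (B t).2 ≤ (A t).2 := by
  have hAc : ContinuousOn A (Icc 0 T) := fun t ht => (hA t ht).continuousWithinAt
  have hBc : ContinuousOn B (Icc 0 T) := fun t ht => (hB t ht).continuousWithinAt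
  have hright : ∀ {F F' : ℝ → ℝ × ℝ}, (∀ t ∈ Icc 0 T, HasDerivWithinAt F (F' t) (Icc 0 T) t) →
      ∀ t ∈ Ico 0 T, HasDerivWithinAt F (F' t) (Ici t) t := fun hF t ht =>
    (hF t (Ico_subset_Icc_self ht)).mono_of_mem_nhdsWithin (Icc_mem_nhdsGE_of_mem ht)
  obtain ⟨R, hR⟩ := ((isCompact_Icc.image_of_continuousOn hAc).union
    (isCompact_Icc.image_of_continuousOn hBc)).isBounded.exists_norm_le
  obtain ⟨K, hK⟩ :=
    hLip.locallyLipschitzOn.exists_lipschitzOnWith_of_compact (isCompact_closedBall 0 R)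
  have hball : ∀ t ∈ Icc 0 T, A t ∈ closedBall 0 R ∧ B t ∈ closedBall 0 R := fun t ht =>
    ⟨mem_closedBall_zero_iff.2 (hR _ (.inl ⟨t, ht, rfl⟩)),
      mem_closedBall_zero_iff.2 (hR _ (.inr ⟨t, ht, rfl⟩))⟩
  have hIco : Ico (0 : ℝ) T ⊆ Icc 0 T := Ico_subset_Icc_self
  exact subsolution_le_supersolution_of_quasiMonotone hK
    (fun p hp q hq => mk_min_mem_closedBall_zero hp hq) hquasi1 hquasi2 hAc hBc
    (hright hA) (hright hB) (fun t ht => (hball t (hIco ht)).1) (fun t ht => (hball t (hIco ht)).2)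
    (fun t ht => ⟨hA1 t (hIco ht), hA2 t (hIco ht)⟩) (fun t ht => (hBode t (hIco ht)).le)
    ⟨h01, h02⟩
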